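/- arXiv:2402.03304 — 3 statements merged into one kernel-verified Lean document; each statement's English description precedes it below -/
import Mathlib

section
/- On ℝⁿ with f(y) = ‖y‖²/4, for any constant c > 0, the function v(t,y) := (c + e^{−t})^{−n/2} exp(‖y‖²/(4(c eᵗ + 1))) solves the drift heat equation ∂v/∂t = Δv − (1/2) y·∇v. -/
noncomputable def pderiv6 {n : ℕ} (v : EuclideanSpace ℝ (Fin n) → ℝ) (i : Fin n)
    (y : EuclideanSpace ℝ (Fin n)) : ℝ :=
  fderiv ℝ v y (EuclideanSpace.single i 1)

noncomputable def lap6 {n : ℕ} (v : EuclideanSpace ℝ (Fin n) → ℝ)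
    (y : EuclideanSpace ℝ (Fin n)) : ℝ :=
  ∑ i, pderiv6 (pderiv6 v i) i y

/-! For fixed `t` the function `v t` is a Gaussian `a exp(b‖y‖²)` with `b = 1/(4(ceᵗ+1))`, so
`Δv - ½ y·∇v = v (2bn + (4b² - b)‖y‖²)`. Writing `Q = ceᵗ + 1`, the amplitude satisfies
`c + e⁻ᵗ = e⁻ᵗ Q`, whence its logarithmic time derivative is `n/(2Q) = 2bn`, and the exponent has
time derivative `-‖y‖² ceᵗ/(4Q²) = (4b² - b)‖y‖²`. -/

open Real

theorem hasFDerivAt_mul_exp_mul_norm_sq {F : Type*} [NormedAddCommGroup F]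
    [InnerProductSpace ℝ F] (a b : ℝ) (y : F) :
    HasFDerivAt (fun z : F => a * exp (b * ‖z‖ ^ 2))
      ((2 * a * b * exp (b * ‖y‖ ^ 2)) • innerSL ℝ y) y := by
  have h := (((hasStrictFDerivAt_norm_sq y).hasFDerivAt.const_mul b).exp).const_mul a
  refine h.congr_fderiv ?_
  ext z
  simp only [smul_apply, smul_eq_mul, innerSL_apply_apply, nsmul_eq_mul]
  ring

section EuclideanGaussian

variable {n : ℕ}

theorem pderiv6_mul_exp_mul_norm_sq (a b : ℝ) (i : Fin n) (y : EuclideanSpace ℝ (Fin n)) :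
    pderiv6 (fun z => a * exp (b * ‖z‖ ^ 2)) i y = 2 * a * b * exp (b * ‖y‖ ^ 2) * y i := by
  rw [pderiv6, (hasFDerivAt_mul_exp_mul_norm_sq a b y).fderiv]
  simp [EuclideanSpace.inner_single_right]

theorem pderiv6_pderiv6_mul_exp_mul_norm_sq (a b : ℝ) (i : Fin n)
    (y : EuclideanSpace ℝ (Fin n)) :
    pderiv6 (pderiv6 (fun z => a * exp (b * ‖z‖ ^ 2)) i) i y
      = a * exp (b * ‖y‖ ^ 2) * (2 * b + 4 * b ^ 2 * y i ^ 2) := by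
  have hfun : pderiv6 (fun z => a * exp (b * ‖z‖ ^ 2)) i
      = fun z => 2 * a * b * exp (b * ‖z‖ ^ 2) * z i :=
    funext (pderiv6_mul_exp_mul_norm_sq a b i)
  have h : HasFDerivAt (fun z : EuclideanSpace ℝ (Fin n) => 2 * a * b * exp (b * ‖z‖ ^ 2) * z i)
      _ y :=
    (hasFDerivAt_mul_exp_mul_norm_sq (2 * a * b) b y).mul
      (EuclideanSpace.proj (𝕜 := ℝ) i).hasFDerivAt
  rw [hfun, pderiv6, h.fderiv]
  simp only [add_apply, smul_apply, PiLp.proj_apply, PiLp.single_eq_same, smul_eq_mul, mul_one,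
    coe_innerSL_apply, EuclideanSpace.inner_single_right, ringHom_apply, one_mul]
  ring

theorem lap6_mul_exp_mul_norm_sq (a b : ℝ) (y : EuclideanSpace ℝ (Fin n)) :
    lap6 (fun z => a * exp (b * ‖z‖ ^ 2)) y
      = a * exp (b * ‖y‖ ^ 2) * (2 * b * n + 4 * b ^ 2 * ‖y‖ ^ 2) := by
  simp only [lap6, pderiv6_pderiv6_mul_exp_mul_norm_sq, ← Finset.mul_sum, Finset.sum_add_distrib,
    Finset.sum_const, Finset.card_univ, Fintype.card_fin, nsmul_eq_mul]
  rw [← EuclideanSpace.real_norm_sq_eq]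
  ring

theorem sum_mul_pderiv6_mul_exp_mul_norm_sq (a b : ℝ) (y : EuclideanSpace ℝ (Fin n)) :
    ∑ i, y i * pderiv6 (fun z => a * exp (b * ‖z‖ ^ 2)) i y
      = a * exp (b * ‖y‖ ^ 2) * (2 * b * ‖y‖ ^ 2) := by
  have hterm : ∀ i, y i * (2 * a * b * exp (b * ‖y‖ ^ 2) * y i)
      = 2 * a * b * exp (b * ‖y‖ ^ 2) * y i ^ 2 := fun i => by ring
  simp only [pderiv6_mul_exp_mul_norm_sq, hterm, ← Finset.mul_sum,
    ← EuclideanSpace.real_norm_sq_eq]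
  ring

end EuclideanGaussian

theorem hasDerivAt_add_exp_neg_rpow {c : ℝ} (hc : 0 ≤ c) (p t : ℝ) :
    HasDerivAt (fun s => (c + exp (-s)) ^ p)
      (p * (c + exp (-t)) ^ (p - 1) * -exp (-t)) t := by
  have h := ((hasDerivAt_neg t).exp.const_add c).rpow_const (p := p) (Or.inl (by positivity))
  convert h using 1
  ring

theorem hasDerivAt_div_mul_exp_add_one {c : ℝ} (hc : 0 ≤ c) (r t : ℝ) :
    HasDerivAt (fun s => r / (4 * (c * exp s + 1)))
      (-(r * c * exp t) / (4 * (c * exp t + 1) ^ 2)) t := by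
  have hden := (((hasDerivAt_exp t).const_mul c).add_const 1).const_mul 4
  refine ((hasDerivAt_const t r).div hden (by positivity)).congr_deriv ?_
  field_simp
  ring

/-- The superexponential function `v(t,y) = (c+e^{-t})^{-n/2} exp(‖y‖²/(4(ce^t+1)))`
solves the drift heat equation `∂v/∂t = Δv - (1/2) y·∇v` on `ℝⁿ`. -/
theorem stmt_6 (n : ℕ) (c : ℝ) (hc : 0 < c)
    (v : ℝ → EuclideanSpace ℝ (Fin n) → ℝ)
    (hv : v = fun t y => (c + Real.exp (-t)) ^ (-(n : ℝ) / 2)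
        * Real.exp (‖y‖ ^ 2 / (4 * (c * Real.exp t + 1)))) :
    ∀ (t : ℝ) (y : EuclideanSpace ℝ (Fin n)),
      deriv (fun s => v s y) t
        = lap6 (v t) y - (1 / 2) * ∑ i, y i * pderiv6 (v t) i y := by
  subst hv
  intro t y
  beta_reduce
  have hv_time : HasDerivAt (fun s => (c + exp (-s)) ^ (-(n : ℝ) / 2)
      * exp (‖y‖ ^ 2 / (4 * (c * exp s + 1)))) _ t :=
    (hasDerivAt_add_exp_neg_rpow hc.le (-(n : ℝ) / 2) t).mul
      (hasDerivAt_div_mul_exp_add_one hc.le (‖y‖ ^ 2) t).exp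
  have hv_space : (fun z : EuclideanSpace ℝ (Fin n) => (c + exp (-t)) ^ (-(n : ℝ) / 2)
      * exp (‖z‖ ^ 2 / (4 * (c * exp t + 1))))
      = fun z => (c + exp (-t)) ^ (-(n : ℝ) / 2) * exp ((4 * (c * exp t + 1))⁻¹ * ‖z‖ ^ 2) := by
    simp only [inv_mul_eq_div]
  rw [hv_time.deriv, hv_space, lap6_mul_exp_mul_norm_sq, sum_mul_pderiv6_mul_exp_mul_norm_sq,
    rpow_sub_one (by positivity), exp_neg]
  have hQ : c * exp t + 1 ≠ 0 := by positivity
  have hP : c + (exp t)⁻¹ ≠ 0 := by positivity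
  field_simp
  ring
end

section
/- On ℝⁿ, for any constant c ≥ 1, the function v(t,y) := (c − e^{−t})^{−n/2} exp(−‖y‖²/(4(c eᵗ − 1))) solves the drift heat equation ∂v/∂t = Δv − (1/2) y·∇v for t > 0 when c = 1, and for all t ≥ 0 when c > 1. -/
noncomputable def pderiv7 {n : ℕ} (v : EuclideanSpace ℝ (Fin n) → ℝ) (i : Fin n)
    (y : EuclideanSpace ℝ (Fin n)) : ℝ :=
  fderiv ℝ v y (EuclideanSpace.single i 1)

noncomputable def lap7 {n : ℕ} (v : EuclideanSpace ℝ (Fin n) → ℝ)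
    (y : EuclideanSpace ℝ (Fin n)) : ℝ :=
  ∑ i, pderiv7 (pderiv7 v i) i y

/-!
In space, `v t` is a Gaussian `C exp(b ‖y‖²)` with `b = -1/(4a)`, `a = c eᵗ - 1`, and
`Δ - ½ y·∇` multiplies it by `(4b² - b)‖y‖² + 2nb`. In time, since `c - e⁻ᵗ = e⁻ᵗ a` and
`a' = a + 1`, the logarithmic derivative of `v` is `-n/(2a) + ‖y‖²(a + 1)/(4a²)`, which is the
same multiplier. The only constraint is `a > 0`, i.e. `t > 0` for `c = 1` and `t ≥ 0` for `c > 1`.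
-/

open Real

noncomputable def driftLaplacian {n : ℕ} (u : EuclideanSpace ℝ (Fin n) → ℝ)
    (y : EuclideanSpace ℝ (Fin n)) : ℝ :=
  lap7 u y - (1 / 2) * ∑ i, y i * pderiv7 u i y

section Gaussian

variable {n : ℕ} (C b : ℝ)

theorem hasFDerivAt_gaussian (y : EuclideanSpace ℝ (Fin n)) :
    HasFDerivAt (fun y : EuclideanSpace ℝ (Fin n) => C * exp (b * ‖y‖ ^ 2))
      ((C * exp (b * ‖y‖ ^ 2) * (2 * b)) • innerSL ℝ y) y := by
  have := (((hasStrictFDerivAt_norm_sq y).hasFDerivAt.const_mul b).exp).const_mul C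
  refine this.congr_fderiv ?_
  ext u
  simp only [smul_apply, innerSL_apply_apply, smul_eq_mul, nsmul_eq_mul]
  ring

theorem pderiv7_gaussian (i : Fin n) (y : EuclideanSpace ℝ (Fin n)) :
    pderiv7 (fun y : EuclideanSpace ℝ (Fin n) => C * exp (b * ‖y‖ ^ 2)) i y
      = C * exp (b * ‖y‖ ^ 2) * (2 * b * y i) := by
  rw [pderiv7, (hasFDerivAt_gaussian C b y).fderiv]
  simp [EuclideanSpace.inner_single_right]
  ring

theorem pderiv7_pderiv7_gaussian (i : Fin n) (y : EuclideanSpace ℝ (Fin n)) :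
    pderiv7 (pderiv7 (fun y : EuclideanSpace ℝ (Fin n) => C * exp (b * ‖y‖ ^ 2)) i) i y
      = C * exp (b * ‖y‖ ^ 2) * ((2 * b * y i) ^ 2 + 2 * b) := by
  have hcoord : HasFDerivAt (fun y : EuclideanSpace ℝ (Fin n) => 2 * b * y i)
      ((2 * b) • (EuclideanSpace.proj i : EuclideanSpace ℝ (Fin n) →L[ℝ] ℝ)) y :=
    (EuclideanSpace.proj i : EuclideanSpace ℝ (Fin n) →L[ℝ] ℝ).hasFDerivAt.const_mul _
  have hprod : HasFDerivAt
      (fun y : EuclideanSpace ℝ (Fin n) => C * exp (b * ‖y‖ ^ 2) * (2 * b * y i)) _ y :=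
    (hasFDerivAt_gaussian C b y).mul hcoord
  rw [funext (pderiv7_gaussian C b i), pderiv7, hprod.fderiv]
  simp [EuclideanSpace.inner_single_right]
  ring

theorem lap7_gaussian (y : EuclideanSpace ℝ (Fin n)) :
    lap7 (fun y : EuclideanSpace ℝ (Fin n) => C * exp (b * ‖y‖ ^ 2)) y
      = C * exp (b * ‖y‖ ^ 2) * (4 * b ^ 2 * ‖y‖ ^ 2 + 2 * n * b) := by
  simp only [lap7, pderiv7_pderiv7_gaussian]
  rw [← Finset.mul_sum, Finset.sum_add_distrib, Finset.sum_const, Finset.card_univ,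
    Fintype.card_fin, nsmul_eq_mul, EuclideanSpace.real_norm_sq_eq y]
  simp only [mul_pow, ← Finset.mul_sum]
  ring

theorem sum_mul_pderiv7_gaussian (y : EuclideanSpace ℝ (Fin n)) :
    ∑ i, y i * pderiv7 (fun y : EuclideanSpace ℝ (Fin n) => C * exp (b * ‖y‖ ^ 2)) i y
      = C * exp (b * ‖y‖ ^ 2) * (2 * b * ‖y‖ ^ 2) := by
  simp only [pderiv7_gaussian]
  generalize C * exp (b * ‖y‖ ^ 2) = G
  rw [EuclideanSpace.real_norm_sq_eq y, Finset.mul_sum, Finset.mul_sum]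
  exact Finset.sum_congr rfl fun i _ => by ring

theorem driftLaplacian_gaussian (y : EuclideanSpace ℝ (Fin n)) :
    driftLaplacian (fun y : EuclideanSpace ℝ (Fin n) => C * exp (b * ‖y‖ ^ 2)) y
      = C * exp (b * ‖y‖ ^ 2) * ((4 * b ^ 2 - b) * ‖y‖ ^ 2 + 2 * n * b) := by
  rw [driftLaplacian, lap7_gaussian, sum_mul_pderiv7_gaussian]
  ring

end Gaussian

theorem sub_exp_neg_eq (c t : ℝ) : c - exp (-t) = exp (-t) * (c * exp t - 1) := by
  rw [mul_sub, mul_left_comm, ← exp_add, neg_add_cancel, exp_zero]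
  ring

section TimeDerivative

variable {c t : ℝ}

theorem hasDerivAt_rpow_sub_exp_neg (p : ℝ) (ha : 0 < c * exp t - 1) :
    HasDerivAt (fun s => (c - exp (-s)) ^ p)
      ((c - exp (-t)) ^ p * (p / (c * exp t - 1))) t := by
  have hpos : 0 < c - exp (-t) := by rw [sub_exp_neg_eq]; positivity
  have hbase : HasDerivAt (fun s => c - exp (-s)) (exp (-t)) t := by
    simpa using ((hasDerivAt_neg t).exp).const_sub c
  convert hbase.rpow_const (p := p) (Or.inl hpos.ne') using 1
  rw [rpow_sub_one hpos.ne', sub_exp_neg_eq]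
  field_simp

theorem hasDerivAt_exp_div_sub_one (K : ℝ) (ha : c * exp t - 1 ≠ 0) :
    HasDerivAt (fun s => exp (-K / (4 * (c * exp s - 1))))
      (exp (-K / (4 * (c * exp t - 1))) * (K * (c * exp t) / (4 * (c * exp t - 1) ^ 2))) t := by
  have hden : HasDerivAt (fun s => 4 * (c * exp s - 1)) (4 * (c * exp t)) t :=
    (((hasDerivAt_exp t).const_mul c).sub_const 1).const_mul 4
  have hquot : HasDerivAt (fun s => -K / (4 * (c * exp s - 1))) _ t :=
    (hasDerivAt_const t (-K)).div hden (mul_ne_zero four_ne_zero ha)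
  convert hquot.exp using 1
  field_simp
  ring

end TimeDerivative

theorem deriv_heatSolution_eq_driftLaplacian (n : ℕ) (c t : ℝ) (ha : 0 < c * exp t - 1)
    (y : EuclideanSpace ℝ (Fin n)) :
    deriv (fun s => (c - exp (-s)) ^ (-(n : ℝ) / 2)
        * exp (-‖y‖ ^ 2 / (4 * (c * exp s - 1)))) t
      = driftLaplacian (fun y : EuclideanSpace ℝ (Fin n) => (c - exp (-t)) ^ (-(n : ℝ) / 2)
          * exp (-‖y‖ ^ 2 / (4 * (c * exp t - 1)))) y := by
  have hgauss : (fun y : EuclideanSpace ℝ (Fin n) => (c - exp (-t)) ^ (-(n : ℝ) / 2)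
      * exp (-‖y‖ ^ 2 / (4 * (c * exp t - 1))))
      = fun y => (c - exp (-t)) ^ (-(n : ℝ) / 2)
          * exp (-1 / (4 * (c * exp t - 1)) * ‖y‖ ^ 2) := by
    funext y; ring_nf
  have hv : HasDerivAt (fun s => (c - exp (-s)) ^ (-(n : ℝ) / 2)
      * exp (-‖y‖ ^ 2 / (4 * (c * exp s - 1)))) _ t :=
    (hasDerivAt_rpow_sub_exp_neg _ ha).mul (hasDerivAt_exp_div_sub_one (‖y‖ ^ 2) ha.ne')
  rw [hv.deriv, hgauss, driftLaplacian_gaussian]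
  field_simp
  ring

theorem stmt_7_general (n : ℕ) (c : ℝ)
    (v : ℝ → EuclideanSpace ℝ (Fin n) → ℝ)
    (hv : v = fun t y => (c - Real.exp (-t)) ^ (-(n : ℝ) / 2)
        * Real.exp (-‖y‖ ^ 2 / (4 * (c * Real.exp t - 1)))) :
    (c = 1 → ∀ (t : ℝ), 0 < t → ∀ (y : EuclideanSpace ℝ (Fin n)),
      deriv (fun s => v s y) t
        = lap7 (v t) y - (1 / 2) * ∑ i, y i * pderiv7 (v t) i y) ∧
    (1 < c → ∀ (t : ℝ), 0 ≤ t → ∀ (y : EuclideanSpace ℝ (Fin n)),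
      deriv (fun s => v s y) t
        = lap7 (v t) y - (1 / 2) * ∑ i, y i * pderiv7 (v t) i y) := by
  subst hv
  refine ⟨?_, ?_⟩
  · rintro rfl t ht y
    have ha : 0 < 1 * exp t - 1 := by linarith [one_lt_exp_iff.mpr ht]
    exact deriv_heatSolution_eq_driftLaplacian n 1 t ha y
  · intro hc t ht y
    have ha : 0 < c * exp t - 1 := by nlinarith [one_le_exp ht]
    exact deriv_heatSolution_eq_driftLaplacian n c t ha y

/-- The function `v(t,y) = (c-e^{-t})^{-n/2} exp(-‖y‖²/(4(ce^t-1)))` solves the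
drift heat equation `∂v/∂t = Δv - (1/2) y·∇v` for `t > 0` when `c = 1`, and for
all `t ≥ 0` when `c > 1`. -/
theorem stmt_7 (n : ℕ) (c : ℝ) (hc : 1 ≤ c)
    (v : ℝ → EuclideanSpace ℝ (Fin n) → ℝ)
    (hv : v = fun t y => (c - Real.exp (-t)) ^ (-(n : ℝ) / 2)
        * Real.exp (-‖y‖ ^ 2 / (4 * (c * Real.exp t - 1)))) :
    (c = 1 → ∀ (t : ℝ), 0 < t → ∀ (y : EuclideanSpace ℝ (Fin n)),
      deriv (fun s => v s y) t
        = lap7 (v t) y - (1 / 2) * ∑ i, y i * pderiv7 (v t) i y) ∧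
    (1 < c → ∀ (t : ℝ), 0 ≤ t → ∀ (y : EuclideanSpace ℝ (Fin n)),
      deriv (fun s => v s y) t
        = lap7 (v t) y - (1 / 2) * ∑ i, y i * pderiv7 (v t) i y) :=
  stmt_7_general n c v hv
end

section
/- Let c > 1. Define L(c) := √( lim_{t→∞} [e^{−nt/2} ∫ v(t,y)² e^{−‖y‖²/(2(eᵗ+1))} dy] / ∫ v(0,y)² e^{−‖y‖²/4} dy ), where v(t,y) = (c+e^{−t})^{−n/2} e^{‖y‖²/(4(c eᵗ+1))}. Then L(c) = ((c+1)/(2c))^{n/4}, and L(c) → 1 as c → 1⁺. -/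
open MeasureTheory Real Filter

lemma gauss_aux14 (n : ℕ) (A P Q : ℝ) (hA : 0 < A) (hb : 0 < 1/Q - 2/P) :
    ∫ y : EuclideanSpace ℝ (Fin n),
        (A ^ (-(n:ℝ)/2) * Real.exp (‖y‖^2 / P))^2 * Real.exp (-‖y‖^2 / Q)
    = A ^ (-(n:ℝ)) * (π / (1/Q - 2/P)) ^ ((n:ℝ)/2) := by
  have key : ∀ y : EuclideanSpace ℝ (Fin n),
      (A ^ (-(n:ℝ)/2) * Real.exp (‖y‖^2 / P))^2 * Real.exp (-‖y‖^2 / Q)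
      = A ^ (-(n:ℝ)) * Real.exp (-(1/Q - 2/P) * ‖y‖^2) := by
    intro y
    rw [mul_pow, ← Real.rpow_natCast (A ^ (-(n:ℝ)/2)) 2,
      ← Real.rpow_mul hA.le, ← Real.exp_nat_mul, mul_assoc, ← Real.exp_add]
    congr 1
    · norm_num
    · push_cast; ring
  rw [integral_congr_ae (Filter.Eventually.of_forall key), integral_const_mul,
    GaussianFourier.integral_rexp_neg_mul_sq_norm hb]
  simp

/-- With `v(t,y) = (c+e^{-t})^{-n/2} e^{‖y‖²/(4(ce^t+1))}`, the limit
`ℓ = lim_{t→∞} e^{-nt/2} ∫ v(t,y)² e^{-‖y‖²/(2(e^t+1))} dy` exists, the quantity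
`L(c) = √(ℓ / ∫ v(0,y)² e^{-‖y‖²/4} dy)` equals `((c+1)/(2c))^{n/4}`, and
`L(c) → 1` as `c → 1⁺`. -/
theorem stmt_14 (n : ℕ)
    (v : ℝ → ℝ → EuclideanSpace ℝ (Fin n) → ℝ)
    (hv : v = fun c t y => (c + Real.exp (-t)) ^ (-(n : ℝ) / 2)
        * Real.exp (‖y‖ ^ 2 / (4 * (c * Real.exp t + 1)))) :
    (∀ c : ℝ, 1 < c → ∃ ℓ : ℝ,
      Tendsto (fun t : ℝ => Real.exp (-(n : ℝ) * t / 2)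
          * ∫ y : EuclideanSpace ℝ (Fin n),
              (v c t y) ^ 2 * Real.exp (-‖y‖ ^ 2 / (2 * (Real.exp t + 1))))
        atTop (nhds ℓ) ∧
      Real.sqrt (ℓ / ∫ y : EuclideanSpace ℝ (Fin n),
          (v c 0 y) ^ 2 * Real.exp (-‖y‖ ^ 2 / 4))
        = ((c + 1) / (2 * c)) ^ ((n : ℝ) / 4)) ∧
    Tendsto (fun c : ℝ => ((c + 1) / (2 * c)) ^ ((n : ℝ) / 4))
      (nhdsWithin 1 (Set.Ioi 1)) (nhds 1) := by
  constructor
  · intro c hc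
    have hc0 : (0:ℝ) < c := lt_trans one_pos hc
    have hc1 : (0:ℝ) < c - 1 := by linarith
    have hcp1 : (0:ℝ) < c + 1 := by linarith
    -- positivity of the quadratic coefficient
    have hb : ∀ t : ℝ, (0:ℝ) < 1/(2*(Real.exp t+1)) - 2/(4*(c*Real.exp t+1)) := by
      intro t
      have h1 : (0:ℝ) < Real.exp t + 1 := by positivity
      have h2' : (0:ℝ) < c * Real.exp t + 1 := by positivity
      have e : (2:ℝ)/(4*(c*Real.exp t+1)) = 1/(2*(c*Real.exp t+1)) := by
        rw [div_eq_div_iff (by positivity) (by positivity)]; ring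
      rw [e, sub_pos]
      apply one_div_lt_one_div_of_lt (by positivity)
      have : Real.exp t < c * Real.exp t := by nlinarith [Real.exp_pos t]
      linarith
    -- evaluate the integral at each time t
    have hint : ∀ t : ℝ,
        (∫ y : EuclideanSpace ℝ (Fin n),
            (v c t y) ^ 2 * Real.exp (-‖y‖ ^ 2 / (2 * (Real.exp t + 1))))
        = (c + Real.exp (-t)) ^ (-(n:ℝ))
          * (π / (1/(2*(Real.exp t+1)) - 2/(4*(c*Real.exp t+1)))) ^ ((n:ℝ)/2) := by
      intro t
      have e : ∀ y : EuclideanSpace ℝ (Fin n),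
          (v c t y) ^ 2 * Real.exp (-‖y‖ ^ 2 / (2 * (Real.exp t + 1)))
          = ((c + Real.exp (-t)) ^ (-(n:ℝ)/2)
              * Real.exp (‖y‖^2 / (4 * (c * Real.exp t + 1))))^2
            * Real.exp (-‖y‖^2 / (2*(Real.exp t+1))) := by
        intro y; rw [hv]
      rw [integral_congr_ae (Filter.Eventually.of_forall e)]
      exact gauss_aux14 n _ _ _ (add_pos hc0 (Real.exp_pos _)) (hb t)
    -- the limit function
    set G : ℝ → ℝ := fun s => (c+s) ^ (-(n:ℝ)) * (2*π*(1+s)*(c+s)/(c-1)) ^ ((n:ℝ)/2) with hG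
    refine ⟨G 0, ?_, ?_⟩
    · -- the tendsto claim
      have hGc : ContinuousAt G 0 := by
        apply ContinuousAt.mul
        · exact (continuousAt_const.add continuousAt_id).rpow_const
            (Or.inl (by simpa using hc0.ne'))
        · apply ContinuousAt.rpow_const _ (Or.inr (by positivity))
          exact (((continuousAt_const.mul (continuousAt_const.add continuousAt_id)).mul
            (continuousAt_const.add continuousAt_id)).div_const _)
      have h2 : Tendsto (fun t : ℝ => G (Real.exp (-t))) atTop (nhds (G 0)) :=
        hGc.tendsto.comp Real.tendsto_exp_neg_atTop_nhds_zero
      refine h2.congr fun t => ?_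
      rw [hint t]
      have h1 : (0:ℝ) < Real.exp t + 1 := by positivity
      have h2' : (0:ℝ) < c * Real.exp t + 1 := by positivity
      have hpi : (0:ℝ) ≤ π / (1/(2*(Real.exp t+1)) - 2/(4*(c*Real.exp t+1))) :=
        div_nonneg pi_pos.le (hb t).le
      have hexp : Real.exp (-(n:ℝ) * t / 2) = Real.exp (-t) ^ ((n:ℝ)/2) := by
        rw [← Real.exp_mul]; ring_nf
      rw [hexp, hG]
      simp only
      rw [mul_left_comm, ← Real.mul_rpow (Real.exp_pos _).le hpi]
      congr 2
      have hbval : 1/(2*(Real.exp t+1)) - 2/(4*(c*Real.exp t+1))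
          = (c-1)*Real.exp t/(2*(Real.exp t+1)*(c*Real.exp t+1)) := by
        field_simp
        ring
      rw [hbval, Real.exp_neg]
      have e1 : Real.exp t ≠ 0 := Real.exp_ne_zero t
      field_simp
    · -- the ratio claim
      have hb0 : (0:ℝ) < 1/4 - 2/(4*(c+1)) := by
        rw [sub_pos, div_lt_div_iff₀ (by positivity) (by norm_num)]
        nlinarith
      have hD0 : (∫ y : EuclideanSpace ℝ (Fin n),
            (v c 0 y) ^ 2 * Real.exp (-‖y‖ ^ 2 / 4))
          = (c+1) ^ (-(n:ℝ)) * (π / (1/4 - 2/(4*(c+1)))) ^ ((n:ℝ)/2) := by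
        have e : ∀ y : EuclideanSpace ℝ (Fin n),
            (v c 0 y) ^ 2 * Real.exp (-‖y‖ ^ 2 / 4)
            = ((c+1) ^ (-(n:ℝ)/2) * Real.exp (‖y‖^2 / (4*(c+1))))^2
              * Real.exp (-‖y‖^2 / (4:ℝ)) := by
          intro y; rw [hv]; norm_num
        rw [integral_congr_ae (Filter.Eventually.of_forall e)]
        exact gauss_aux14 n _ _ _ hcp1 hb0
      rw [hD0]
      -- simplify numerator and denominator to single rpow's
      have hGl : G 0 = (2*π/(c*(c-1))) ^ ((n:ℝ)/2) := by
        rw [hG]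
        simp only [add_zero]
        have hcc : (0:ℝ) ≤ 2*π*1*c/(c-1) :=
          div_nonneg (by nlinarith [Real.pi_pos]) hc1.le
        rw [show -(n:ℝ) = (-2)*((n:ℝ)/2) by ring, Real.rpow_mul hc0.le,
          ← Real.mul_rpow (Real.rpow_nonneg hc0.le _) hcc]
        congr 1
        rw [show ((-2):ℝ) = -((2:ℕ):ℝ) by norm_num, Real.rpow_neg hc0.le,
          Real.rpow_natCast]
        field_simp
      have hDl : (c+1) ^ (-(n:ℝ)) * (π / (1/4 - 2/(4*(c+1)))) ^ ((n:ℝ)/2)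
          = (4*π/((c+1)*(c-1))) ^ ((n:ℝ)/2) := by
        rw [show -(n:ℝ) = (-2)*((n:ℝ)/2) by ring, Real.rpow_mul hcp1.le,
          ← Real.mul_rpow (Real.rpow_nonneg hcp1.le _)
            (div_nonneg pi_pos.le hb0.le)]
        congr 1
        rw [show ((-2):ℝ) = -((2:ℕ):ℝ) by norm_num, Real.rpow_neg hcp1.le,
          Real.rpow_natCast]
        rw [show (1:ℝ)/4 - 2/(4*(c+1)) = (c-1)/(4*(c+1)) by field_simp; ring]
        field_simp
      rw [hGl, hDl, ← Real.div_rpow (by positivity) (by positivity),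
        show (2*π/(c*(c-1))) / (4*π/((c+1)*(c-1))) = (c+1)/(2*c) by
          field_simp; ring]
      rw [Real.sqrt_eq_rpow, ← Real.rpow_mul (by positivity : (0:ℝ) ≤ (c+1)/(2*c))]
      congr 1
      ring
  · -- c → 1⁺
    have h1 : Tendsto (fun c : ℝ => (c+1)/(2*c)) (nhdsWithin 1 (Set.Ioi 1)) (nhds 1) := by
      have hcont : ContinuousAt (fun c : ℝ => (c+1)/(2*c)) 1 :=
        ContinuousAt.div (by fun_prop) (by fun_prop) (by norm_num)
      have h2 := hcont.tendsto.mono_left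
        (nhdsWithin_le_nhds (s := Set.Ioi (1:ℝ)))
      norm_num at h2
      exact h2
    have := h1.rpow_const (Or.inr (by positivity : (0:ℝ) ≤ (n:ℝ)/4))
    simpa using this
end
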